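/- A sequence η ∈ c₀* with all η_n > 0 is regular (i.e., there exists C with (η_a)_n ≤ C·η_n for all n) if and only if η_a is regular (i.e., there exists C' with (η_{a²})_n ≤ C'·(η_a)_n for all n). -/

import Mathlib

/-!
If `η_a ≤ C η`, averaging once more gives `η_{a²} ≤ C η_a`. Conversely, regularity of a positive
nonincreasing `ξ` (here `ξ = η_a`) forces `n ξ_n` to grow geometrically: comparing the two halves
of `∑_{j ≤ 2n} ξ_j` gives `(ξ_a)_n ≤ (2 - 1/C) (ξ_a)_{2n}`, so for `K = 2^k` with `k` large,
`2 ξ_n ≤ K ξ_{Kn}`. For `ξ = η_a` this says that `∑_{n < j ≤ Kn} η_j ≥ n (η_a)_n`, while the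
same sum is at most `(K - 1) n η_n`.
-/

open Finset Filter Real

/-- First-order arithmetic mean: (ξ_a)_n = (1/n) ∑_{j=1}^n ξ_j. -/
noncomputable def am (ξ : ℕ → ℝ) (n : ℕ) : ℝ := (∑ j ∈ Finset.Icc 1 n, ξ j) / n

/-- Second-order arithmetic mean. -/
noncomputable def am2 (ξ : ℕ → ℝ) : ℕ → ℝ := am (am ξ)

/-- Harmonic numbers H_n = ∑_{j=1}^n 1/j. -/
noncomputable def harm (n : ℕ) : ℝ := ∑ j ∈ Finset.Icc 1 n, (1 : ℝ) / j

namespace ArithmeticMean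

variable {ξ : ℕ → ℝ}

theorem natCast_mul_am (ξ : ℕ → ℝ) (n : ℕ) : (n : ℝ) * am ξ n = ∑ j ∈ Ioc 0 n, ξ j := by
  rcases n.eq_zero_or_pos with rfl | hn
  · simp
  · rw [am, mul_div_cancel₀ _ (by positivity), ← Icc_add_one_left_eq_Ioc, zero_add]

theorem natCast_mul_am_of_le (ξ : ℕ → ℝ) {n m : ℕ} (hnm : n ≤ m) :
    (m : ℝ) * am ξ m = n * am ξ n + ∑ j ∈ Ioc n m, ξ j := by
  rw [natCast_mul_am, natCast_mul_am, sum_Ioc_consecutive _ n.zero_le hnm]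

theorem sum_Ioc_le_mul (hξ : AntitoneOn ξ (Set.Ici 1)) {n m : ℕ} (hn : 1 ≤ n) (hnm : n ≤ m) :
    ∑ j ∈ Ioc n m, ξ j ≤ ((m : ℝ) - n) * ξ n := by
  have h := sum_le_card_nsmul (Ioc n m) ξ (ξ n) fun j hj =>
    hξ (Set.mem_Ici.2 hn) (Set.mem_Ici.2 (hn.trans (mem_Ioc.1 hj).1.le)) (mem_Ioc.1 hj).1.le
  rwa [Nat.card_Ioc, nsmul_eq_mul, Nat.cast_sub hnm] at h

theorem mul_le_sum_Ioc (hξ : AntitoneOn ξ (Set.Ici 1)) {n m : ℕ} (hnm : n ≤ m) :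
    ((m : ℝ) - n) * ξ m ≤ ∑ j ∈ Ioc n m, ξ j := by
  have h := card_nsmul_le_sum (Ioc n m) ξ (ξ m) fun j hj =>
    hξ (Set.mem_Ici.2 (Nat.one_le_iff_ne_zero.2 (mem_Ioc.1 hj).1.ne_bot))
      (Set.mem_Ici.2 (Nat.one_le_iff_ne_zero.2 ((mem_Ioc.1 hj).1.trans_le (mem_Ioc.1 hj).2).ne_bot))
      (mem_Ioc.1 hj).2
  rwa [Nat.card_Ioc, nsmul_eq_mul, Nat.cast_sub hnm] at h

theorem le_am (hξ : AntitoneOn ξ (Set.Ici 1)) {n : ℕ} (hn : 1 ≤ n) : ξ n ≤ am ξ n := by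
  have h := mul_le_sum_Ioc hξ n.zero_le
  rw [← natCast_mul_am, Nat.cast_zero, sub_zero] at h
  exact le_of_mul_le_mul_left h (by positivity)

theorem am_pos (hξ : ∀ n, 1 ≤ n → 0 < ξ n) {n : ℕ} (hn : 1 ≤ n) : 0 < am ξ n :=
  div_pos (sum_pos (fun j hj => hξ j (mem_Icc.1 hj).1) ⟨1, by simp [hn]⟩) (by positivity)

theorem am_antitoneOn (hξ : AntitoneOn ξ (Set.Ici 1)) : AntitoneOn (am ξ) (Set.Ici 1) := by
  intro n hn m _ hnm
  have hn' : (0 : ℝ) < n := by have := Set.mem_Ici.1 hn; positivity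
  have key : (m : ℝ) * am ξ m ≤ m * am ξ n := by
    calc (m : ℝ) * am ξ m = n * am ξ n + ∑ j ∈ Ioc n m, ξ j := natCast_mul_am_of_le ξ hnm
      _ ≤ n * am ξ n + ((m : ℝ) - n) * am ξ n := by
        gcongr
        exact (sum_Ioc_le_mul hξ hn hnm).trans
            (mul_le_mul_of_nonneg_left (le_am hξ hn) (sub_nonneg.2 (by exact_mod_cast hnm)))
      _ = m * am ξ n := by ring
  exact le_of_mul_le_mul_left key (hn'.trans_le (by exact_mod_cast hnm))

theorem am_le_mul_am {ζ : ℕ → ℝ} {C : ℝ} (h : ∀ j, 1 ≤ j → ξ j ≤ C * ζ j) (n : ℕ) :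
    am ξ n ≤ C * am ζ n := by
  rw [am, am, mul_div_assoc', mul_sum]
  gcongr with j hj
  exact h j (mem_Icc.1 hj).1

theorem le_pow_mul_of_le_mul_two_mul {f : ℕ → ℝ} {r : ℝ} (hr : 0 ≤ r)
    (h : ∀ n, 1 ≤ n → f n ≤ r * f (2 * n)) (k : ℕ) {n : ℕ} (hn : 1 ≤ n) :
    f n ≤ r ^ k * f (2 ^ k * n) := by
  induction k with
  | zero => simp
  | succ k ih =>
    calc f n ≤ r ^ k * f (2 ^ k * n) := ih
      _ ≤ r ^ k * (r * f (2 * (2 ^ k * n))) :=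
        mul_le_mul_of_nonneg_left (h _ (Nat.one_le_iff_ne_zero.2 (by positivity))) (by positivity)
      _ = r ^ (k + 1) * f (2 ^ (k + 1) * n) := by ring_nf

theorem am_le_mul_am_two_mul (hξ : AntitoneOn ξ (Set.Ici 1)) {C : ℝ} (hC0 : 0 < C)
    (hC : ∀ n, 1 ≤ n → am ξ n ≤ C * ξ n) {n : ℕ} (hn : 1 ≤ n) :
    am ξ n ≤ (2 - C⁻¹) * am ξ (2 * n) := by
  have htail : (n : ℝ) * (C⁻¹ * am ξ (2 * n)) ≤ ∑ j ∈ Ioc n (2 * n), ξ j :=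
    calc (n : ℝ) * (C⁻¹ * am ξ (2 * n)) ≤ n * ξ (2 * n) := by
          gcongr
          rw [inv_mul_le_iff₀ hC0]
          exact hC _ (by omega)
      _ = (((2 * n : ℕ) : ℝ) - n) * ξ (2 * n) := by push_cast; ring
      _ ≤ ∑ j ∈ Ioc n (2 * n), ξ j := mul_le_sum_Ioc hξ (by omega)
  have hsplit := natCast_mul_am_of_le ξ (by omega : n ≤ 2 * n)
  push_cast at hsplit
  have key : (n : ℝ) * am ξ n ≤ n * ((2 - C⁻¹) * am ξ (2 * n)) := by linarith
  exact le_of_mul_le_mul_left key (by positivity)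

theorem exists_two_mul_le_mul_of_am_le_mul (hξ : AntitoneOn ξ (Set.Ici 1))
    (hpos : ∀ n, 1 ≤ n → 0 < ξ n) {C : ℝ} (hC : ∀ n, 1 ≤ n → am ξ n ≤ C * ξ n) :
    ∃ K : ℕ, 1 ≤ K ∧ ∀ n, 1 ≤ n → 2 * ξ n ≤ K * ξ (K * n) := by
  have hC1 : 1 ≤ C := by
    have h := hC 1 le_rfl
    simp only [am, Icc_self, sum_singleton, Nat.cast_one, div_one] at h
    exact le_of_mul_le_mul_right (by rwa [one_mul]) (hpos 1 le_rfl)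
  have hC0 : 0 < C := by linarith
  obtain ⟨k, hk⟩ := exists_pow_lt_of_lt_one (inv_pos.2 (by positivity : 0 < 2 * C))
    (by simp [hC0] : 1 - (2 * C)⁻¹ < 1)
  refine ⟨2 ^ k, Nat.one_le_two_pow, fun n hn => ?_⟩
  have hKn : 1 ≤ 2 ^ k * n := Nat.one_le_iff_ne_zero.2 (by positivity)
  have hr : (0 : ℝ) ≤ 2 - C⁻¹ := by
    have := inv_le_one_of_one_le₀ hC1; linarith
  have hξK := (hpos _ hKn).le
  calc 2 * ξ n ≤ 2 * ((2 - C⁻¹) ^ k * am ξ (2 ^ k * n)) := by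
        gcongr
        exact (le_am hξ hn).trans (le_pow_mul_of_le_mul_two_mul (f := am ξ) hr
          (fun m hm => am_le_mul_am_two_mul hξ hC0 hC hm) k hn)
    _ ≤ 2 * ((2 - C⁻¹) ^ k * (C * ξ (2 ^ k * n))) := by
        gcongr; exact hC _ hKn
    _ = 2 ^ k * (2 * C * (1 - (2 * C)⁻¹) ^ k) * ξ (2 ^ k * n) := by
        rw [show (2 : ℝ) - C⁻¹ = 2 * (1 - (2 * C)⁻¹) by field_simp, mul_pow]; ring
    _ ≤ 2 ^ k * (2 * C * (2 * C)⁻¹) * ξ (2 ^ k * n) := by gcongr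
    _ = ((2 ^ k : ℕ) : ℝ) * ξ (2 ^ k * n) := by
        rw [mul_inv_cancel₀ (by positivity)]; push_cast; ring

theorem am_le_sub_one_mul_of_two_mul_am_le (hξ : AntitoneOn ξ (Set.Ici 1)) {K : ℕ}
    (hK : 1 ≤ K) (h : ∀ n, 1 ≤ n → 2 * am ξ n ≤ K * am ξ (K * n)) {n : ℕ} (hn : 1 ≤ n) :
    am ξ n ≤ ((K : ℝ) - 1) * ξ n := by
  have hnK : n ≤ K * n := Nat.le_mul_of_pos_left n hK
  have hsplit := natCast_mul_am_of_le ξ hnK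
  have htail := sum_Ioc_le_mul hξ hn hnK
  have hdouble := mul_le_mul_of_nonneg_left (h n hn) n.cast_nonneg
  push_cast at hsplit htail
  have key : (n : ℝ) * am ξ n ≤ n * (((K : ℝ) - 1) * ξ n) := by linarith
  exact le_of_mul_le_mul_left key (by positivity)

end ArithmeticMean

open ArithmeticMean in
theorem stmt_14_general (η : ℕ → ℝ)
    (hmono : ∀ n : ℕ, 1 ≤ n → η (n + 1) ≤ η n)
    (hpos : ∀ n : ℕ, 1 ≤ n → 0 < η n) :
    (∃ C : ℝ, ∀ n : ℕ, 1 ≤ n → am η n ≤ C * η n) ↔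
    (∃ C' : ℝ, ∀ n : ℕ, 1 ≤ n → am2 η n ≤ C' * am η n) := by
  constructor
  · rintro ⟨C, hC⟩
    exact ⟨C, fun n _ => am_le_mul_am hC n⟩
  · rintro ⟨C', hC'⟩
    have hanti : AntitoneOn η (Set.Ici 1) := antitoneOn_nat_Ici_of_succ_le hmono
    obtain ⟨K, hK, hdouble⟩ := exists_two_mul_le_mul_of_am_le_mul (am_antitoneOn hanti)
      (fun n hn => am_pos hpos hn) hC'
    exact ⟨K - 1, fun n hn => am_le_sub_one_mul_of_two_mul_am_le hanti hK hdouble hn⟩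

theorem stmt_14 (η : ℕ → ℝ)
    (hmono : ∀ n : ℕ, 1 ≤ n → η (n + 1) ≤ η n)
    (hpos : ∀ n : ℕ, 1 ≤ n → 0 < η n)
    (hlim : Tendsto η atTop (nhds 0)) :
    (∃ C : ℝ, ∀ n : ℕ, 1 ≤ n → am η n ≤ C * η n) ↔
    (∃ C' : ℝ, ∀ n : ℕ, 1 ≤ n → am2 η n ≤ C' * am η n) :=
  stmt_14_general η hmono hpos
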